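/- Let G be a connected graph on n vertices, m edges, and t triangles. Then PI_w(G) ≤ n²m − 9t²/m. -/

import Mathlib

/-!
For an edge `uv` with `c` common neighbours, the union of the two neighbourhoods has at most `n`
vertices, so `deg u + deg v ≤ n + c`; a common neighbour is equidistant from `u` and `v`, so
`n_u + n_v ≤ n - c`. Hence each edge contributes at most `(n + c)(n - c) = n² - c²`. Summing over
the `2m` ordered adjacent pairs, the values `c` add up to `6t`, and Cauchy–Schwarz gives
`∑ c² ≥ (6t)² / (2m)`.
-/

open Finset
open scoped Classical

/-- Number of vertices strictly closer to `u` than to `v`. -/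
noncomputable def ncl {V : Type*} [Fintype V] (G : SimpleGraph V) (u v : V) : ℕ :=
  (Finset.univ.filter fun x => G.dist x u < G.dist x v).card

/-- Weighted vertex PI index: each edge `uv` contributes
`(deg u + deg v) * (n_u(e) + n_v(e))`; each edge is counted twice in the double sum. -/
noncomputable def PIw {V : Type*} [Fintype V] (G : SimpleGraph V) : ℝ :=
  (∑ u, ∑ v, if G.Adj u v then
    (((G.degree u + G.degree v : ℕ) : ℝ) * ((ncl G u v + ncl G v u : ℕ) : ℝ)) else 0) / 2

namespace SimpleGraph

variable {V : Type*} [Fintype V] (G : SimpleGraph V)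

theorem card_commonNeighbors_eq_card_filter (u v : V) :
    Fintype.card (G.commonNeighbors u v) = #{w | G.Adj u w ∧ G.Adj v w} := by
  rw [← Set.toFinset_card]
  congr 1
  ext w
  simp [mem_commonNeighbors]

theorem degree_add_degree_le (u v : V) :
    G.degree u + G.degree v ≤ Fintype.card V + Fintype.card (G.commonNeighbors u v) := by
  have hinter :
      G.neighborFinset u ∩ G.neighborFinset v = ({w | G.Adj u w ∧ G.Adj v w} : Finset V) := by
    ext w
    simp
  rw [← card_neighborFinset_eq_degree, ← card_neighborFinset_eq_degree,
    ← card_union_add_card_inter, hinter, card_commonNeighbors_eq_card_filter]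
  exact Nat.add_le_add_right (card_le_univ _) _


theorem sum_sum_ite_adj {M : Type*} [AddCommMonoid M] (f : V → V → M) :
    ∑ u, ∑ v, (if G.Adj u v then f u v else 0)
      = ∑ p ∈ ({p : V × V | G.Adj p.1 p.2} : Finset _), f p.1 p.2 := by
  rw [sum_filter, Fintype.sum_prod_type]

theorem card_commonNeighbors_eq_card_triangles_containing {u v : V} (h : G.Adj u v) :
    Fintype.card (G.commonNeighbors u v) = #{s ∈ G.cliqueFinset 3 | u ∈ s ∧ v ∈ s} := by
  rw [← Set.toFinset_card]
  refine card_bij (fun w _ => {u, v, w}) ?_ ?_ ?_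
  · intro w hw
    rw [Set.mem_toFinset, mem_commonNeighbors] at hw
    simp [is3Clique_triple_iff.2 ⟨h, hw.1, hw.2⟩]
  · intro w₁ hw₁ w₂ hw₂ heq
    rw [Set.mem_toFinset, mem_commonNeighbors] at hw₁ hw₂
    have : w₁ ∈ ({u, v, w₂} : Finset V) := heq ▸ by simp
    simp only [mem_insert, mem_singleton] at this
    rcases this with rfl | rfl | rfl
    · exact (G.irrefl hw₁.1).elim
    · exact (G.irrefl hw₁.2).elim
    · rfl
  · intro s hs
    simp only [mem_filter, mem_cliqueFinset_iff] at hs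
    obtain ⟨hclique, hu, hv⟩ := hs
    -- the third vertex of the triangle is the unique element of `s \ {u, v}`
    have hpair : {u, v} ⊆ s := by simp [insert_subset_iff, hu, hv]
    obtain ⟨w, hw⟩ : ∃ w, s \ {u, v} = {w} := by
      rw [← card_eq_one, card_sdiff_of_subset hpair, hclique.card_eq, card_pair h.ne]
    have hws : w ∈ s \ {u, v} := hw ▸ mem_singleton_self w
    simp only [mem_sdiff, mem_insert, mem_singleton, not_or] at hws
    refine ⟨w, ?_, ?_⟩
    · rw [Set.mem_toFinset, mem_commonNeighbors]
      exact ⟨hclique.1 hu hws.1 (Ne.symm hws.2.1), hclique.1 hv hws.1 (Ne.symm hws.2.2)⟩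
    · rw [← union_sdiff_of_subset hpair, hw, insert_union, ← insert_eq]

theorem card_adj_pairs_of_mem_cliqueFinset {s : Finset V} (hs : s ∈ G.cliqueFinset 3) :
    #{p : V × V | G.Adj p.1 p.2 ∧ p.1 ∈ s ∧ p.2 ∈ s} = 6 := by
  rw [mem_cliqueFinset_iff] at hs
  have hoffDiag : ({p : V × V | G.Adj p.1 p.2 ∧ p.1 ∈ s ∧ p.2 ∈ s} : Finset _) = s.offDiag := by
    ext ⟨x, y⟩
    simp only [mem_filter, mem_univ, true_and, mem_offDiag]
    exact ⟨fun ⟨hxy, hx, hy⟩ => ⟨hx, hy, hxy.ne⟩, fun ⟨hx, hy, hxy⟩ => ⟨hs.1 hx hy hxy, hx, hy⟩⟩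
  rw [hoffDiag, offDiag_card, hs.card_eq]

theorem sum_card_commonNeighbors_adj :
    ∑ p ∈ ({p : V × V | G.Adj p.1 p.2} : Finset _), Fintype.card (G.commonNeighbors p.1 p.2)
      = 6 * #(G.cliqueFinset 3) := by
  let r : V × V → Finset V → Prop := fun p s => p.1 ∈ s ∧ p.2 ∈ s
  calc _ = ∑ p ∈ ({p : V × V | G.Adj p.1 p.2} : Finset _),
          #((G.cliqueFinset 3).bipartiteAbove r p) :=
        sum_congr rfl fun p hp =>
          card_commonNeighbors_eq_card_triangles_containing G (mem_filter.1 hp).2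
    _ = ∑ s ∈ G.cliqueFinset 3, #(({p : V × V | G.Adj p.1 p.2} : Finset _).bipartiteBelow r s) :=
        sum_card_bipartiteAbove_eq_sum_card_bipartiteBelow _
    _ = ∑ s ∈ G.cliqueFinset 3, 6 := by
        refine sum_congr rfl fun s hs => ?_
        rw [bipartiteBelow, filter_filter]
        exact card_adj_pairs_of_mem_cliqueFinset G hs
    _ = 6 * #(G.cliqueFinset 3) := by rw [sum_const, smul_eq_mul, mul_comm]

end SimpleGraph

open SimpleGraph in
theorem ncl_add_ncl_add_card_commonNeighbors_le {V : Type*} [Fintype V] (G : SimpleGraph V)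
    (u v : V) : ncl G u v + ncl G v u + Fintype.card (G.commonNeighbors u v) ≤ Fintype.card V := by
  rw [ncl, ncl, card_commonNeighbors_eq_card_filter, card_filter, card_filter, card_filter,
    ← sum_add_distrib, ← sum_add_distrib, ← card_univ, card_eq_sum_ones]
  refine sum_le_sum fun x _ => ?_
  by_cases hcommon : G.Adj u x ∧ G.Adj v x
  · have hu : G.dist x u = 1 := dist_eq_one_iff_adj.2 hcommon.1.symm
    have hv : G.dist x v = 1 := dist_eq_one_iff_adj.2 hcommon.2.symm
    simp [hu, hv, hcommon]
  · split_ifs <;> omega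

theorem degree_add_degree_mul_ncl_add_ncl_le {V : Type*} [Fintype V] (G : SimpleGraph V)
    (u v : V) :
    ((G.degree u + G.degree v : ℕ) : ℝ) * ((ncl G u v + ncl G v u : ℕ) : ℝ)
      ≤ (Fintype.card V : ℝ) ^ 2 - (Fintype.card (G.commonNeighbors u v) : ℝ) ^ 2 := by
  have hdeg : ((G.degree u + G.degree v : ℕ) : ℝ)
      ≤ Fintype.card V + Fintype.card (G.commonNeighbors u v) := by
    exact_mod_cast G.degree_add_degree_le u v
  have hncl : ((ncl G u v + ncl G v u : ℕ) : ℝ)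
      ≤ Fintype.card V - Fintype.card (G.commonNeighbors u v) := by
    rw [le_sub_iff_add_le]
    exact_mod_cast ncl_add_ncl_add_card_commonNeighbors_le G u v
  calc _ ≤ ((Fintype.card V : ℝ) + Fintype.card (G.commonNeighbors u v))
        * (Fintype.card V - Fintype.card (G.commonNeighbors u v)) :=
        mul_le_mul hdeg hncl (Nat.cast_nonneg _) (by positivity)
    _ = _ := by ring

theorem PIw_upper_bound_triangles_general {V : Type*} [Fintype V] (G : SimpleGraph V) :
    PIw G ≤ (Fintype.card V : ℝ) ^ 2 * (G.edgeFinset.card : ℝ) -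
      9 * ((G.cliqueFinset 3).card : ℝ) ^ 2 / (G.edgeFinset.card : ℝ) := by
  set P : Finset (V × V) := {p | G.Adj p.1 p.2}
  set c : V × V → ℝ := fun p => Fintype.card (G.commonNeighbors p.1 p.2)
  have hcardP : (#P : ℝ) = 2 * #G.edgeFinset := by
    exact_mod_cast G.two_mul_card_edgeFinset.symm
  have hsum_c : ∑ p ∈ P, c p = 6 * #(G.cliqueFinset 3) := by
    simp only [c]
    exact_mod_cast G.sum_card_commonNeighbors_adj
  have hPIw : PIw G ≤ (Fintype.card V : ℝ) ^ 2 * #G.edgeFinset - (∑ p ∈ P, c p ^ 2) / 2 := by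
    rw [PIw, G.sum_sum_ite_adj]
    calc _ ≤ (∑ p ∈ P, ((Fintype.card V : ℝ) ^ 2 - c p ^ 2)) / 2 := by
          gcongr with p
          exact degree_add_degree_mul_ncl_add_ncl_le G p.1 p.2
      _ = _ := by rw [sum_sub_distrib, sum_const, nsmul_eq_mul, hcardP]; ring
  have hcauchy : 9 * (#(G.cliqueFinset 3) : ℝ) ^ 2 / #G.edgeFinset ≤ (∑ p ∈ P, c p ^ 2) / 2 := by
    refine div_le_of_le_mul₀ (by positivity) (by positivity) ?_
    have := sq_sum_le_card_mul_sum_sq (s := P) (f := c)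
    rw [hsum_c, hcardP] at this
    linarith
  linarith

theorem PIw_upper_bound_triangles {V : Type*} [Fintype V] (G : SimpleGraph V)
    (hconn : G.Connected) :
    PIw G ≤ (Fintype.card V : ℝ) ^ 2 * (G.edgeFinset.card : ℝ) -
      9 * ((G.cliqueFinset 3).card : ℝ) ^ 2 / (G.edgeFinset.card : ℝ) :=
  PIw_upper_bound_triangles_general G
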